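/- If u ∈ R is a monomial that is a nonzerodivisor on R/I, then mono(u·I) = u·mono(I). -/

import Mathlib

open MvPolynomial

/-- A (monic) monomial in a polynomial ring. -/
def IsMonomial {k : Type*} [Field k] {n : ℕ} (f : MvPolynomial (Fin n) k) : Prop :=
  ∃ s : Fin n →₀ ℕ, f = MvPolynomial.monomial s 1

/-- `mono I` is the largest monomial subideal of `I`: the ideal generated by all
monomials contained in `I`. -/
noncomputable def mono {k : Type*} [Field k] {n : ℕ} (I : Ideal (MvPolynomial (Fin n) k)) :
    Ideal (MvPolynomial (Fin n) k) :=
  Ideal.span {f | IsMonomial f ∧ f ∈ I}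

/-- A monomial ideal is one generated by its monomials. -/
def IsMonomialIdeal {k : Type*} [Field k] {n : ℕ} (I : Ideal (MvPolynomial (Fin n) k)) : Prop :=
  mono I = I

/-- The homogeneous maximal ideal `(x₁, …, xₙ)`. -/
noncomputable def maxIdeal (k : Type*) [Field k] (n : ℕ) : Ideal (MvPolynomial (Fin n) k) :=
  Ideal.span (Set.range MvPolynomial.X)

/-- A graded (homogeneous) ideal. -/
def IsHomogeneousIdeal {k : Type*} [Field k] {n : ℕ}
    (I : Ideal (MvPolynomial (Fin n) k)) : Prop :=
  ∀ f ∈ I, ∀ i : ℕ, MvPolynomial.homogeneousComponent i f ∈ I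

theorem MvPolynomial.eq_monomial_sub_of_monomial_mul_eq {σ R : Type*} [CommSemiring R]
    [Nontrivial R] {s t : σ →₀ ℕ} {z : MvPolynomial σ R}
    (h : monomial t 1 * z = monomial s 1) : z = monomial (s - t) 1 := by
  have hts : t ≤ s := monomial_one_dvd_monomial_one.mp ⟨z, h.symm⟩
  rw [← monomial_one_mul_cancel_left_iff (m := t), h, monomial_mul, mul_one,
    add_tsub_cancel_of_le hts]

section Mono

variable {k : Type*} [Field k] {n : ℕ}

theorem IsMonomial.mul {f g : MvPolynomial (Fin n) k} (hf : IsMonomial f) (hg : IsMonomial g) :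
    IsMonomial (f * g) := by
  obtain ⟨s, rfl⟩ := hf
  obtain ⟨t, rfl⟩ := hg
  exact ⟨s + t, by rw [monomial_mul, mul_one]⟩

theorem IsMonomial.of_mul_left {u z : MvPolynomial (Fin n) k} (hu : IsMonomial u)
    (huz : IsMonomial (u * z)) : IsMonomial z := by
  obtain ⟨t, rfl⟩ := hu
  obtain ⟨s, hs⟩ := huz
  exact ⟨s - t, eq_monomial_sub_of_monomial_mul_eq hs⟩

theorem mem_mono {I : Ideal (MvPolynomial (Fin n) k)} {f : MvPolynomial (Fin n) k}
    (hf : IsMonomial f) (hfI : f ∈ I) : f ∈ mono I :=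
  Ideal.subset_span ⟨hf, hfI⟩

theorem mono_le {I J : Ideal (MvPolynomial (Fin n) k)}
    (h : ∀ f, IsMonomial f → f ∈ I → f ∈ J) : mono I ≤ J :=
  Ideal.span_le.mpr fun f ⟨hf, hfI⟩ => h f hf hfI

theorem mono_mul_le (I J : Ideal (MvPolynomial (Fin n) k)) : mono I * mono J ≤ mono (I * J) := by
  rw [mono, mono, Ideal.span_mul_span]
  refine Ideal.span_le.mpr ?_
  rintro _ ⟨f, ⟨hf, hfI⟩, g, ⟨hg, hgJ⟩, rfl⟩
  exact mem_mono (hf.mul hg) (Ideal.mul_mem_mul hfI hgJ)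

theorem span_singleton_le_mono {I : Ideal (MvPolynomial (Fin n) k)} {u : MvPolynomial (Fin n) k}
    (hu : IsMonomial u) (huI : u ∈ I) : Ideal.span {u} ≤ mono I :=
  (Ideal.span_singleton_le_iff_mem _).mpr (mem_mono hu huI)

end Mono

theorem mono_monomial_mul_general {k : Type*} [Field k] {n : ℕ}
    (I : Ideal (MvPolynomial (Fin n) k)) (u : MvPolynomial (Fin n) k)
    (hu : IsMonomial u) :
    mono (Ideal.span {u} * I) = Ideal.span {u} * mono I := by
  apply le_antisymm
  · refine mono_le fun f hf hfuI => ?_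
    obtain ⟨z, hzI, rfl⟩ := Ideal.mem_span_singleton_mul.mp hfuI
    exact Ideal.mul_mem_mul (Ideal.mem_span_singleton_self u) (mem_mono (hu.of_mul_left hf) hzI)
  · calc Ideal.span {u} * mono I ≤ mono (Ideal.span {u}) * mono I :=
          Ideal.mul_mono_left (span_singleton_le_mono hu (Ideal.mem_span_singleton_self u))
      _ ≤ mono (Ideal.span {u} * I) := mono_mul_le _ _

theorem mono_monomial_mul {k : Type*} [Field k] {n : ℕ}
    (I : Ideal (MvPolynomial (Fin n) k)) (u : MvPolynomial (Fin n) k)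
    (hu : IsMonomial u)
    (hnzd : ∀ x : MvPolynomial (Fin n) k, u * x ∈ I → x ∈ I) :
    mono (Ideal.span {u} * I) = Ideal.span {u} * mono I :=
  mono_monomial_mul_general I u hu
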